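/- Let H be self-adjoint with Hψ₀ = 0 for a unit vector ψ₀, spectral gap ΔE > 0 (σ(H) ⊆ {0} ∪ [ΔE, ∞)), and let A be a bounded operator. Define Ã := (1/√(2πq)) ∫_ℝ e^{iHt} A e^{-iHt} e^{-t²/(2q)} dt (weakly). If ⟨ψ₀, Aψ₀⟩ = 0, then Ãψ₀ = ∫_{σ(H)∖{0}} e^{-λ²q/2} dP(λ) Aψ₀, where P is the spectral measure of H. -/

import Mathlib

/-!
Since `P({0})ψ₀ = ψ₀`, every `f(H)` acts on `ψ₀` as `f(0)`; in particular `e^{-iHt}ψ₀ = ψ₀`, so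
`Ãψ₀ = (2πq)^{-1/2} ∫ e^{-t²/(2q)} e^{iHt} Aψ₀ dt`. A star-algebra homomorphism from functions to
operators is contractive for the sup norm, hence is a bounded linear map on `ℓ^∞`. Since
`H = Φ(id)` is a bounded operator, `Φ` only sees the part of the spectrum where `|λ| < ‖H‖ + 1`,
and there `t ↦ e^{iλt}` is Lipschitz into `ℓ^∞`. So `Φ` commutes with the Bochner integral, and the
Fourier transform of the Gaussian gives `∫ e^{-t²/(2q)} e^{iHt} dt = √(2πq) e^{-qH²/2}`. Finally
`⟨ψ₀, Aψ₀⟩ = 0` says `P({0}) Aψ₀ = 0`, which removes the point `0` from the spectrum.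
-/

open MeasureTheory
open scoped InnerProductSpace

variable {E : Type*} [NormedAddCommGroup E] [InnerProductSpace ℂ E] [CompleteSpace E]

open Complex Set
open scoped ENNReal NNReal

variable {α : Type*}

theorem norm_cexp_I_mul_sub_cexp_I_mul_le (a b : ℝ) :
    ‖cexp (I * a) - cexp (I * b)‖ ≤ |a - b| := by
  have h : cexp (I * a) - cexp (I * b) = cexp (I * b) * (cexp (I * ↑(a - b)) - 1) := by
    rw [mul_sub, ← Complex.exp_add, mul_one]
    push_cast
    ring_nf
  rw [h, norm_mul, mul_comm I, norm_exp_ofReal_mul_I, one_mul]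
  exact Real.norm_exp_I_mul_ofReal_sub_one_le

noncomputable def cexpCurve (ρ : α → ℝ) (t : ℝ) : lp (fun _ : α => ℂ) ∞ :=
  ⟨fun x => cexp (I * ρ x * t), memℓp_infty ⟨1, by
    rintro _ ⟨x, rfl⟩
    simp [norm_exp]⟩⟩

theorem norm_cexpCurve_le (ρ : α → ℝ) (t : ℝ) : ‖cexpCurve ρ t‖ ≤ 1 :=
  lp.norm_le_of_forall_le zero_le_one fun x => by simp [cexpCurve, norm_exp]

theorem lipschitzWith_cexpCurve {ρ : α → ℝ} {M : ℝ≥0} (hρ : ∀ x, |ρ x| ≤ M) :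
    LipschitzWith M (cexpCurve ρ) := by
  refine LipschitzWith.of_dist_le_mul fun t s => ?_
  rw [dist_eq_norm, Real.dist_eq]
  refine lp.norm_le_of_forall_le (by positivity) fun x => ?_
  change ‖cexp (I * ρ x * t) - cexp (I * ρ x * s)‖ ≤ _
  have h := norm_cexp_I_mul_sub_cexp_I_mul_le (ρ x * t) (ρ x * s)
  push_cast at h
  rw [← mul_sub, abs_mul] at h
  simpa [mul_assoc] using h.trans (mul_le_mul_of_nonneg_right (hρ x) (abs_nonneg _))

theorem integrable_exp_neg_sq_div {q : ℝ} (hq : 0 < q) :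
    Integrable (fun t : ℝ => Real.exp (-(t ^ 2) / (2 * q))) := by
  convert integrable_exp_neg_mul_sq (b := (2 * q)⁻¹) (by positivity) using 2 with t
  field_simp

theorem integral_exp_neg_sq_div_smul_cexp {q : ℝ} (hq : 0 < q) (lam : ℝ) :
    ∫ t : ℝ, Real.exp (-(t ^ 2) / (2 * q)) • cexp (I * lam * t) =
      (√(2 * Real.pi * q) : ℂ) * Real.exp (-(lam ^ 2) * q / 2) := by
  have hq' : (q : ℂ) ≠ 0 := by exact_mod_cast hq.ne'
  have h := fourierIntegral_gaussian (b := ((2 * q)⁻¹ : ℂ)) (by simp; positivity) lam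
  convert h using 1
  · congr 1 with t
    rw [real_smul, mul_comm, ofReal_exp]
    congr 2
    push_cast
    field_simp
  · congr 1
    · rw [show (Real.pi / ((2 * q)⁻¹ : ℂ)) = ((2 * Real.pi * q : ℝ) : ℂ) by push_cast; field_simp,
        show ((1 : ℂ) / 2) = ((1 / 2 : ℝ) : ℂ) by norm_num, ← ofReal_cpow (by positivity),
        ← Real.sqrt_eq_rpow]
    · rw [ofReal_exp]
      congr 1
      push_cast
      field_simp
      ring

namespace StarAlgHom

variable (φ : (α → ℂ) →⋆ₐ[ℂ] (E →L[ℂ] E))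

theorem inner_map_star_mul_self_apply (f : α → ℂ) (z : E) :
    ⟪z, φ (star f * f) z⟫_ℂ = ((‖φ f z‖ ^ 2 : ℝ) : ℂ) := by
  rw [map_mul, map_star, ContinuousLinearMap.star_eq_adjoint, mul_apply_eq_comp,
    ContinuousLinearMap.adjoint_inner_right, inner_self_eq_norm_sq_to_K]
  norm_cast

theorem norm_apply_sq_add_norm_apply_sq {f g k : α → ℂ}
    (h : star f * f + star g * g = star k * k) (z : E) :
    ‖φ f z‖ ^ 2 + ‖φ g z‖ ^ 2 = ‖φ k z‖ ^ 2 := by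
  have := congrArg (fun a => ⟪z, φ a z⟫_ℂ) h
  simp only [map_add, add_apply, inner_add_right, inner_map_star_mul_self_apply] at this
  exact_mod_cast this

theorem norm_le_of_forall_norm_le {f : α → ℂ} {M : ℝ} (hM : 0 ≤ M) (hf : ∀ x, ‖f x‖ ≤ M) :
    ‖φ f‖ ≤ M := by
  refine ContinuousLinearMap.opNorm_le_bound _ hM fun z => ?_
  let g : α → ℂ := fun x => (√(M ^ 2 - ‖f x‖ ^ 2) : ℝ)
  have hfg : star f * f + star g * g = star (algebraMap ℂ _ (M : ℂ)) * algebraMap ℂ _ (M : ℂ) := by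
    funext x
    have : ‖f x‖ ^ 2 ≤ M ^ 2 := pow_le_pow_left₀ (norm_nonneg _) (hf x) 2
    simp only [Pi.add_apply, Pi.mul_apply, Pi.star_apply, RCLike.star_def, conj_mul',
      Pi.algebraMap_apply, Algebra.algebraMap_self, RingHom.id_apply, g, norm_real,
      Real.norm_eq_abs, abs_of_nonneg (Real.sqrt_nonneg _), abs_of_nonneg hM]
    norm_cast
    rw [Real.sq_sqrt (sub_nonneg.mpr this)]
    ring
  have h := φ.norm_apply_sq_add_norm_apply_sq hfg z
  rw [AlgHomClass.commutes, Algebra.algebraMap_eq_smul_one, smul_apply,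
    one_apply_eq_self, norm_smul, norm_real, Real.norm_of_nonneg hM] at h
  exact pow_le_pow_iff_left₀ (norm_nonneg _) (by positivity) two_ne_zero |>.mp
    (by nlinarith [sq_nonneg ‖φ g z‖])

theorem map_indicator_le_norm_eq_zero (ρ : α → ℂ) {M : ℝ} (hM : ‖φ ρ‖ < M) :
    φ ({x | M ≤ ‖ρ x‖}.indicator 1) = 0 := by
  set T := {x | M ≤ ‖ρ x‖}
  have hM0 : 0 < M := (norm_nonneg _).trans_lt hM
  have hfac : T.indicator 1 = T.indicator (fun x => (ρ x)⁻¹) * ρ * T.indicator 1 := by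
    funext x
    by_cases hx : x ∈ T
    · have : ρ x ≠ 0 := norm_pos_iff.mp (hM0.trans_le hx)
      simp [hx, this]
    · simp [hx]
  have hinv : ‖φ (T.indicator fun x => (ρ x)⁻¹)‖ ≤ M⁻¹ := by
    refine φ.norm_le_of_forall_norm_le (by positivity) fun x => ?_
    by_cases hx : x ∈ T
    · simpa [hx] using inv_anti₀ hM0 hx
    · simp [hx, hM0.le]
  have hle : ‖φ (T.indicator 1)‖ ≤ M⁻¹ * ‖φ ρ‖ * ‖φ (T.indicator 1)‖ := by
    calc ‖φ (T.indicator 1)‖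
        = ‖φ (T.indicator fun x => (ρ x)⁻¹) * φ ρ * φ (T.indicator 1)‖ := by
          rw [← map_mul, ← map_mul, ← hfac]
      _ ≤ ‖φ (T.indicator fun x => (ρ x)⁻¹)‖ * ‖φ ρ‖ * ‖φ (T.indicator 1)‖ := norm_mul₃_le
      _ ≤ M⁻¹ * ‖φ ρ‖ * ‖φ (T.indicator 1)‖ := by gcongr
  have hlt : M⁻¹ * ‖φ ρ‖ < 1 := by rwa [inv_mul_lt_iff₀ hM0, mul_one]
  exact norm_le_zero_iff.mp (by nlinarith [norm_nonneg (φ (T.indicator 1))])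

theorem map_eq_of_eqOn_norm_lt (ρ : α → ℂ) {M : ℝ} (hM : ‖φ ρ‖ < M) {f g : α → ℂ}
    (hfg : EqOn f g {x | ‖ρ x‖ < M}) : φ f = φ g := by
  have key : ∀ h : α → ℂ, φ h = φ ({x | ‖ρ x‖ < M}.indicator h) := fun h => by
    have hsplit : h = {x | ‖ρ x‖ < M}.indicator h + h * {x | M ≤ ‖ρ x‖}.indicator 1 := by
      funext x
      by_cases hx : M ≤ ‖ρ x‖ <;> simp [hx, indicator, not_le.mp]
    conv_lhs => rw [hsplit]
    rw [map_add, map_mul, φ.map_indicator_le_norm_eq_zero ρ hM, mul_zero, add_zero]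
  rw [key f, key g, indicator_congr hfg]

theorem map_apply_eq_smul_of_map_indicator_singleton_apply {a : α} {v : E}
    (hv : φ (Set.indicator {a} 1) v = v) (f : α → ℂ) : φ f v = f a • v := by
  have hfa : f * Set.indicator {a} 1 = f a • Set.indicator {a} 1 := by
    funext x
    by_cases hx : x = a <;> simp [hx]
  calc φ f v = φ f (φ (Set.indicator {a} 1) v) := by rw [hv]
    _ = f a • v := by
      rw [← mul_apply_eq_comp, ← map_mul, hfa, map_smul, smul_apply, hv]

noncomputable def lpInftyCLM : lp (fun _ : α => ℂ) ∞ →L[ℂ] (E →L[ℂ] E) :=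
  LinearMap.mkContinuous
    { toFun := fun f => φ f
      map_add' := fun f g => by rw [lp.coeFn_add, map_add]
      map_smul' := fun c f => by rw [lp.coeFn_smul, map_smul]; rfl }
    1 fun f => by
      simpa using φ.norm_le_of_forall_norm_le (norm_nonneg f)
        (lp.norm_apply_le_norm ENNReal.top_ne_zero f)

theorem integral_smul_map_cexp_of_abs_le {ρ : α → ℝ} {M : ℝ≥0} (hρ : ∀ x, |ρ x| ≤ M)
    {g : ℝ → ℝ} (hg : Integrable g) :
    Integrable (fun t => g t • φ (fun x => cexp (I * ρ x * t))) ∧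
      ∫ t, g t • φ (fun x => cexp (I * ρ x * t)) =
        φ (fun x => ∫ t, g t • cexp (I * ρ x * t)) := by
  have hF : Integrable (fun t => g t • cexpCurve ρ t) :=
    hg.smul_of_top_left (memLp_top_of_bound
      (lipschitzWith_cexpCurve hρ).continuous.aestronglyMeasurable 1
      (ae_of_all _ (norm_cexpCurve_le ρ)))
  have hφF : (fun t => g t • φ (fun x => cexp (I * ρ x * t))) =
      fun t => φ.lpInftyCLM (g t • cexpCurve ρ t) := by
    funext t
    rw [ContinuousLinearMap.map_smul_of_tower]
    rfl
  have hcoe : ⇑(∫ t, g t • cexpCurve ρ t) = fun x => ∫ t, g t • cexp (I * ρ x * t) := by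
    funext x
    exact ((lp.evalCLM ℂ _ ∞ x).integral_comp_comm hF).symm
  refine ⟨hφF ▸ φ.lpInftyCLM.integrable_comp hF, ?_⟩
  rw [hφF, φ.lpInftyCLM.integral_comp_comm hF, ← hcoe]
  rfl

theorem integral_smul_map_cexp (ρ : α → ℝ) {g : ℝ → ℝ} (hg : Integrable g) :
    Integrable (fun t => g t • φ (fun x => cexp (I * ρ x * t))) ∧
      ∫ t, g t • φ (fun x => cexp (I * ρ x * t)) =
        φ (fun x => ∫ t, g t • cexp (I * ρ x * t)) := by
  -- `φ` only sees `ρ` where `|ρ| < M`, and there `ρ` agrees with its bounded truncation `τ`.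
  set M : ℝ≥0 := ‖φ (fun x => (ρ x : ℂ))‖₊ + 1
  have hM : ‖φ (fun x => (ρ x : ℂ))‖ < M := by simp [M]
  set τ : α → ℝ := {x | ‖(ρ x : ℂ)‖ < M}.indicator ρ with hτ_def
  have hτ : ∀ x, |τ x| ≤ M := fun x => by
    by_cases hx : x ∈ {x | ‖(ρ x : ℂ)‖ < M}
    · rw [hτ_def, indicator_of_mem hx]
      simpa using (show |ρ x| < M by simpa using hx).le
    · rw [hτ_def, indicator_of_notMem hx]
      simp
  have hρτ : ∀ h : ℝ → ℂ, φ (fun x => h (τ x)) = φ (fun x => h (ρ x)) := fun h =>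
    φ.map_eq_of_eqOn_norm_lt _ hM fun x hx => by rw [hτ_def, indicator_of_mem hx]
  have hexp (t : ℝ) := hρτ (fun r => cexp (I * r * t))
  have hfourier := hρτ (fun r => ∫ t, g t • cexp (I * r * t))
  simpa only [hexp, hfourier] using φ.integral_smul_map_cexp_of_abs_le hτ hg

end StarAlgHom

theorem exists_starAlgHom_coe_eq {A : Type*} [Semiring A] [Algebra ℂ A] [Star A]
    (Φ : A → (E →L[ℂ] E)) (hadd : ∀ f g, Φ (f + g) = Φ f + Φ g)
    (hsmul : ∀ (c : ℂ) f, Φ (c • f) = c • Φ f) (hmul : ∀ f g, Φ (f * g) = Φ f * Φ g)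
    (hstar : ∀ f, Φ (star f) = ContinuousLinearMap.adjoint (Φ f)) (hone : Φ 1 = 1) :
    ∃ φ : A →⋆ₐ[ℂ] (E →L[ℂ] E), ⇑φ = Φ :=
  ⟨{ toFun := Φ
     map_one' := hone
     map_mul' := hmul
     map_zero' := by simpa using hadd 0 0
     map_add' := hadd
     commutes' := fun c => by
       rw [Algebra.algebraMap_eq_smul_one, hsmul, hone, Algebra.algebraMap_eq_smul_one]
     map_star' := fun f => (hstar f).trans (ContinuousLinearMap.star_eq_adjoint _).symm }, rfl⟩

/-- `Φ f` stands for `f(H)` (Borel functional calculus), `S` for the spectrum of `H`, and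
`Φ (Set.indicator {0} 1)` for the ground-state projection `P({0})`. -/
theorem heisenberg_gaussian_average_ground_state_general
    (Φ : (ℝ → ℂ) → (E →L[ℂ] E))
    (hadd : ∀ f g, Φ (f + g) = Φ f + Φ g)
    (hsmul : ∀ (c : ℂ) f, Φ (c • f) = c • Φ f)
    (hmul : ∀ f g, Φ (f * g) = Φ f * Φ g)
    (hstar : ∀ f, Φ (star f) = ContinuousLinearMap.adjoint (Φ f))
    (hone : Φ 1 = 1)
    (S : Set ℝ)
    (hsupp : ∀ f g : ℝ → ℂ, Set.EqOn f g S → Φ f = Φ g)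
    (ψ₀ : E) (hψ₀ : ‖ψ₀‖ = 1)
    (hGS : ∀ x : E, Φ (Set.indicator {(0 : ℝ)} 1) x = ⟪ψ₀, x⟫_ℂ • ψ₀)
    (A : E →L[ℂ] E) (hA : ⟪ψ₀, A ψ₀⟫_ℂ = 0)
    (q : ℝ) (hq : 0 < q)
    (hInt : Integrable (fun t : ℝ =>
      Real.exp (-(t ^ 2) / (2 * q)) •
        (Φ (fun lam => Complex.exp (Complex.I * lam * t)) * A *
          Φ (fun lam => Complex.exp (-(Complex.I * lam * t))))))
    (Atil : E →L[ℂ] E)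
    (hAtil : Atil = ((Real.sqrt (2 * Real.pi * q) : ℂ))⁻¹ •
      ∫ t : ℝ, Real.exp (-(t ^ 2) / (2 * q)) •
        (Φ (fun lam => Complex.exp (Complex.I * lam * t)) * A *
          Φ (fun lam => Complex.exp (-(Complex.I * lam * t))))) :
    Atil ψ₀ =
      Φ (Set.indicator (S \ {0})
        (fun lam => (Real.exp (-(lam ^ 2) * q / 2) : ℂ))) (A ψ₀) := by
  obtain ⟨φ, rfl⟩ := exists_starAlgHom_coe_eq Φ hadd hsmul hmul hstar hone
  have hφψ₀ : ∀ f, φ f ψ₀ = f 0 • ψ₀ := φ.map_apply_eq_smul_of_map_indicator_singleton_apply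
    (by rw [hGS, inner_self_eq_norm_sq_to_K, hψ₀]; simp)
  have hφAψ₀ : φ (Set.indicator {0} 1) (A ψ₀) = 0 := by rw [hGS, hA, zero_smul]
  obtain ⟨hint, hφint⟩ := φ.integral_smul_map_cexp (fun lam => lam) (integrable_exp_neg_sq_div hq)
  have hc : (√(2 * Real.pi * q) : ℂ) ≠ 0 := by exact_mod_cast (Real.sqrt_pos.2 (by positivity)).ne'
  have hdrop0 : EqOn (Set.indicator (S \ {0}) (fun lam => (Real.exp (-(lam ^ 2) * q / 2) : ℂ)))
      ((fun lam => (Real.exp (-(lam ^ 2) * q / 2) : ℂ)) * (1 - Set.indicator {0} 1)) S := by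
    intro lam hlam
    by_cases h0 : lam = 0 <;> simp [h0, hlam]
  calc Atil ψ₀
      = (√(2 * Real.pi * q) : ℂ)⁻¹ • (∫ t : ℝ, Real.exp (-(t ^ 2) / (2 * q)) •
          φ (fun lam => cexp (I * lam * t))) (A ψ₀) := by
        rw [hAtil, smul_apply, ContinuousLinearMap.integral_apply hInt,
          ContinuousLinearMap.integral_apply hint]
        simp [hφψ₀]
    _ = φ (fun lam => (Real.exp (-(lam ^ 2) * q / 2) : ℂ)) (A ψ₀) := by
        simp_rw [hφint, integral_exp_neg_sq_div_smul_cexp hq]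
        rw [show (fun lam : ℝ => (√(2 * Real.pi * q) : ℂ) * (Real.exp (-(lam ^ 2) * q / 2) : ℂ)) =
            (√(2 * Real.pi * q) : ℂ) • fun lam => (Real.exp (-(lam ^ 2) * q / 2) : ℂ) from rfl,
          map_smul, smul_apply, smul_smul, inv_mul_cancel₀ hc, one_smul]
    _ = _ := by
        rw [hsupp _ _ hdrop0, map_mul, map_sub, map_one, mul_apply_eq_comp, sub_apply,
          one_apply_eq_self, hφAψ₀, sub_zero]

/-- Gaussian-averaged Heisenberg evolution on the ground state. `Φ` encodes the
Borel functional calculus of a self-adjoint `H` with spectrum `S ⊆ {0} ∪ [ΔE, ∞)`,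
ground eigenprojection `P({0}) = ⟨·,ψ₀⟩ψ₀` (so `Hψ₀ = 0`). For bounded `A` with
`⟨ψ₀, Aψ₀⟩ = 0` and `Ã = (1/√(2πq)) ∫ e^{iHt} A e^{−iHt} e^{−t²/(2q)} dt`,
one has `Ãψ₀ = ∫_{σ(H)∖{0}} e^{−λ²q/2} dP(λ) Aψ₀`. -/
theorem heisenberg_gaussian_average_ground_state
    (Φ : (ℝ → ℂ) → (E →L[ℂ] E))
    (hadd : ∀ f g, Φ (f + g) = Φ f + Φ g)
    (hsmul : ∀ (c : ℂ) f, Φ (c • f) = c • Φ f)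
    (hmul : ∀ f g, Φ (f * g) = Φ f * Φ g)
    (hstar : ∀ f, Φ (star f) = ContinuousLinearMap.adjoint (Φ f))
    (hone : Φ 1 = 1)
    (S : Set ℝ) (hSmeas : MeasurableSet S)
    (hsupp : ∀ f g : ℝ → ℂ, Set.EqOn f g S → Φ f = Φ g)
    (ΔE : ℝ) (hΔE : 0 < ΔE) (hS : S ⊆ {0} ∪ Set.Ici ΔE) (h0S : (0 : ℝ) ∈ S)
    (ψ₀ : E) (hψ₀ : ‖ψ₀‖ = 1)
    (hGS : ∀ x : E, Φ (Set.indicator {(0 : ℝ)} 1) x = ⟪ψ₀, x⟫_ℂ • ψ₀)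
    (A : E →L[ℂ] E) (hA : ⟪ψ₀, A ψ₀⟫_ℂ = 0)
    (q : ℝ) (hq : 0 < q)
    (hInt : Integrable (fun t : ℝ =>
      Real.exp (-(t ^ 2) / (2 * q)) •
        (Φ (fun lam => Complex.exp (Complex.I * lam * t)) * A *
          Φ (fun lam => Complex.exp (-(Complex.I * lam * t))))))
    (Atil : E →L[ℂ] E)
    (hAtil : Atil = ((Real.sqrt (2 * Real.pi * q) : ℂ))⁻¹ •
      ∫ t : ℝ, Real.exp (-(t ^ 2) / (2 * q)) •
        (Φ (fun lam => Complex.exp (Complex.I * lam * t)) * A *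
          Φ (fun lam => Complex.exp (-(Complex.I * lam * t))))) :
    Atil ψ₀ =
      Φ (Set.indicator (S \ {0})
        (fun lam => (Real.exp (-(lam ^ 2) * q / 2) : ℂ))) (A ψ₀) :=
  heisenberg_gaussian_average_ground_state_general Φ hadd hsmul hmul hstar hone S hsupp ψ₀ hψ₀ hGS A
    hA q hq hInt Atil hAtil
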